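/- arXiv:1411.3568 — 4 statements merged into one kernel-verified Lean document; each statement's English description precedes it below -/
import Mathlib

section
/- Let X be a topological space and let (μ_n) be a sequence of Borel probability measures on X satisfying the large deviations principle with rate function J (where J is lower semicontinuous but not assumed to have compact sublevel sets). Let φ : X → ℝ be an upper semicontinuous function. Then limsup_{n→∞} (1/n) log ∫_X e^{n φ(x)} μ_n(dx) ≤ sup_{x∈X} [φ(x) − J(x)] holds if and only if lim_{M→∞} limsup_{n→∞} (1/n) log ∫_X e^{n φ(x)} 1{φ(x) > M} μ_n(dx) ≤ sup_{x∈X} [φ(x) − J(x)]. -/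
/-!
The tail integral is at most the full one, which gives one direction. For the other, fix a real
`s ≥ sup (φ - J)`, a step `δ > 0` and a threshold `M`, and split `X` into `{φ < s}`, the finitely
many slabs `{a ≤ φ < a + δ}` with `a = s + j δ ≤ M`, and the tail `{M < φ}`. On a slab the
integrand is at most `e^{n (a + δ)}`, and the slab lies in `{a ≤ φ}`, which is closed by upper
semicontinuity; there `J ≥ a - s`, so the upper large deviation bound makes the slab's integral
grow at rate at most `s + δ`. Since the exponential growth rate of a finite sum is the maximum of
the rates, the whole integral grows at rate at most `max (s + δ) (tail rate at M)`.
-/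

open MeasureTheory Filter Topology ENNReal ExpGrowth

lemma limsup_inv_mul_log_eq_expGrowthSup (u : ℕ → ℝ≥0∞) :
    limsup (fun n : ℕ => ((n : ℝ)⁻¹ : EReal) * ENNReal.log (u n)) atTop = expGrowthSup u := by
  refine limsup_congr (Eventually.of_forall fun n => ?_)
  rw [div_eq_mul_inv, mul_comm, EReal.coe_natCast]

theorem exists_mem_Ico_add_mul {s δ t M : ℝ} (hδ : 0 < δ) (hst : s ≤ t) (htM : t ≤ M) :
    ∃ j : Fin (⌊(M - s) / δ⌋₊ + 1), t ∈ Set.Ico (s + j * δ) (s + (j + 1) * δ) := by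
  have hq : 0 ≤ (t - s) / δ := div_nonneg (sub_nonneg.2 hst) hδ.le
  refine ⟨⟨⌊(t - s) / δ⌋₊, Nat.lt_succ_of_le (Nat.floor_mono ?_)⟩, ?_, ?_⟩
  · gcongr
  · have := (le_div_iff₀ hδ).1 (Nat.floor_le hq)
    simp only
    linarith
  · have := (div_lt_iff₀ hδ).1 (Nat.lt_floor_add_one ((t - s) / δ))
    simp only
    linarith

lemma neg_iInf_le_of_iSup_sub_le {X : Type*} {φ : X → ℝ} {J : X → ℝ≥0∞} {s : ℝ}
    (hS : ⨆ x, ((φ x : EReal) - J x) ≤ s) (a : ℝ) :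
    -(⨅ x ∈ φ ⁻¹' Set.Ici a, (J x : EReal)) ≤ ((s - a : ℝ) : EReal) := by
  rw [EReal.neg_le, ← EReal.coe_neg, neg_sub]
  refine le_iInf₂ fun x (hx : a ≤ φ x) => ?_
  have hxS : (φ x : EReal) - J x ≤ s := (le_iSup _ x).trans hS
  obtain hJx | hJx := eq_or_ne (J x) ⊤
  · simp [hJx]
  lift J x to NNReal using hJx with r
  rw [EReal.coe_nnreal_eq_coe_real] at hxS ⊢
  have : φ x - r ≤ s := mod_cast hxS
  exact mod_cast (by linarith : a - s ≤ r)

section Laplace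

variable {X : Type*} [MeasurableSpace X] (μ : ℕ → Measure X) (φ : X → ℝ)

noncomputable def laplaceIntegral (E : Set X) (n : ℕ) : ℝ≥0∞ :=
  ∫⁻ x in E, ENNReal.ofReal (Real.exp (n * φ x)) ∂μ n

lemma laplaceIntegral_univ :
    laplaceIntegral μ φ Set.univ = fun n => ∫⁻ x, ENNReal.ofReal (Real.exp (n * φ x)) ∂μ n :=
  funext fun _ => setLIntegral_univ _

lemma laplaceIntegral_mono {E F : Set X} (h : E ⊆ F) :
    laplaceIntegral μ φ E ≤ laplaceIntegral μ φ F :=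
  fun _ => lintegral_mono_set h

lemma expGrowthSup_laplaceIntegral_union_le (E F : Set X) :
    expGrowthSup (laplaceIntegral μ φ (E ∪ F)) ≤
      expGrowthSup (laplaceIntegral μ φ E) ⊔ expGrowthSup (laplaceIntegral μ φ F) := by
  rw [← expGrowthSup_add]
  exact expGrowthSup_monotone fun n => lintegral_union_le _ E F

lemma expGrowthSup_laplaceIntegral_iUnion_le {ι : Type*} [Fintype ι] (E : ι → Set X) :
    expGrowthSup (laplaceIntegral μ φ (⋃ i, E i)) ≤
      ⨆ i, expGrowthSup (laplaceIntegral μ φ (E i)) := by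
  have h := expGrowthSup_sum (fun i => laplaceIntegral μ φ (E i)) Finset.univ
  simp only [Finset.mem_univ, iSup_pos] at h
  rw [← h]
  refine expGrowthSup_monotone fun n => ?_
  rw [Finset.sum_apply]
  exact (lintegral_iUnion_le E _).trans_eq (tsum_fintype _)

lemma expGrowthSup_laplaceIntegral_le {E F : Set X} {b : ℝ} (hb : ∀ x ∈ E, φ x ≤ b)
    (hEF : E ⊆ F) :
    expGrowthSup (laplaceIntegral μ φ E) ≤ b + expGrowthSup (fun n => μ n F) := by
  have hbound : laplaceIntegral μ φ E ≤ (fun n : ℕ => EReal.exp (b * n)) * fun n => μ n F := by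
    intro n
    calc laplaceIntegral μ φ E n ≤ ∫⁻ _ in E, ENNReal.ofReal (Real.exp (n * b)) ∂μ n :=
          setLIntegral_mono measurable_const fun x hx => by gcongr; exact hb x hx
      _ ≤ EReal.exp (b * n) * μ n F := by
          rw [setLIntegral_const, mul_comm (n : ℝ)]
          exact mul_le_mul_right (measure_mono hEF) _
  calc expGrowthSup (laplaceIntegral μ φ E)
      ≤ expGrowthSup ((fun n : ℕ => EReal.exp (b * n)) * fun n => μ n F) :=
        expGrowthSup_monotone hbound
    _ ≤ b + expGrowthSup (fun n => μ n F) := by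
        refine (expGrowthSup_mul_le ?_ ?_).trans_eq (by rw [expGrowthSup_exp]) <;>
          simp [expGrowthSup_exp]

theorem expGrowthSup_laplaceIntegral_univ_le [TopologicalSpace X] {J : X → ℝ≥0∞}
    (hub : ∀ F : Set X, IsClosed F → expGrowthSup (fun n => μ n F) ≤ -(⨅ x ∈ F, (J x : EReal)))
    (hφ : UpperSemicontinuous φ) {s δ : ℝ} (hS : ⨆ x, ((φ x : EReal) - J x) ≤ s) (hδ : 0 < δ)
    (M : ℝ) :
    expGrowthSup (laplaceIntegral μ φ Set.univ) ≤
      ((s + δ : ℝ) : EReal) ⊔ expGrowthSup (laplaceIntegral μ φ {x | M < φ x}) := by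
  set slab : Fin (⌊(M - s) / δ⌋₊ + 1) → Set X :=
    fun j => φ ⁻¹' Set.Ico (s + j * δ) (s + (j + 1) * δ)
  have hcover : Set.univ ⊆ (φ ⁻¹' Set.Iio s ∪ ⋃ j, slab j) ∪ {x | M < φ x} := by
    intro x _
    by_cases hs : φ x < s
    · exact Or.inl (Or.inl hs)
    by_cases hM : M < φ x
    · exact Or.inr hM
    obtain ⟨j, hj⟩ := exists_mem_Ico_add_mul hδ (not_lt.1 hs) (not_lt.1 hM)
    exact Or.inl (Or.inr (Set.mem_iUnion.2 ⟨j, hj⟩))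
  have hbottom : expGrowthSup (laplaceIntegral μ φ (φ ⁻¹' Set.Iio s)) ≤ (s + δ : ℝ) := by
    have hrate : -(⨅ x ∈ Set.univ, (J x : EReal)) ≤ 0 :=
      EReal.neg_le.2 (by simpa using fun x => EReal.coe_ennreal_nonneg (J x))
    calc _ ≤ s + expGrowthSup (fun n => μ n Set.univ) :=
          expGrowthSup_laplaceIntegral_le μ φ (fun x hx => le_of_lt hx) (Set.subset_univ _)
      _ ≤ (s : EReal) + 0 := add_le_add_right ((hub _ isClosed_univ).trans hrate) _
      _ ≤ (s + δ : ℝ) := mod_cast (by linarith : s + 0 ≤ s + δ)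
  have hslab (j) : expGrowthSup (laplaceIntegral μ φ (slab j)) ≤ (s + δ : ℝ) := by
    have hrate := (hub _ (hφ.isClosed_preimage (s + j * δ))).trans (neg_iInf_le_of_iSup_sub_le hS _)
    calc _ ≤ ((s + (j + 1) * δ : ℝ) : EReal) + expGrowthSup (fun n => μ n (φ ⁻¹' Set.Ici _)) :=
          expGrowthSup_laplaceIntegral_le μ φ (fun x hx => hx.2.le) (fun x hx => hx.1)
      _ ≤ ((s + (j + 1) * δ : ℝ) : EReal) + ((s - (s + j * δ) : ℝ) : EReal) :=
          add_le_add_right hrate _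
      _ = (s + δ : ℝ) := by rw [← EReal.coe_add]; congr 1; ring
  calc _ ≤ expGrowthSup (laplaceIntegral μ φ ((φ ⁻¹' Set.Iio s ∪ ⋃ j, slab j) ∪ {x | M < φ x}))
        := expGrowthSup_monotone (laplaceIntegral_mono μ φ hcover)
    _ ≤ (expGrowthSup (laplaceIntegral μ φ (φ ⁻¹' Set.Iio s)) ⊔
          ⨆ j, expGrowthSup (laplaceIntegral μ φ (slab j))) ⊔
          expGrowthSup (laplaceIntegral μ φ {x | M < φ x}) :=
        (expGrowthSup_laplaceIntegral_union_le μ φ _ _).trans <| sup_le_sup_right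
          ((expGrowthSup_laplaceIntegral_union_le μ φ _ _).trans <|
            sup_le_sup_left (expGrowthSup_laplaceIntegral_iUnion_le μ φ slab) _) _
    _ ≤ _ := sup_le_sup_right (sup_le hbottom (iSup_le hslab)) _

theorem expGrowthSup_laplaceIntegral_univ_le_of_tail [TopologicalSpace X] {J : X → ℝ≥0∞}
    (hub : ∀ F : Set X, IsClosed F → expGrowthSup (fun n => μ n F) ≤ -(⨅ x ∈ F, (J x : EReal)))
    (hφ : UpperSemicontinuous φ)
    (htail : limsup (fun M : ℝ => expGrowthSup (laplaceIntegral μ φ {x | M < φ x})) atTop ≤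
      ⨆ x, ((φ x : EReal) - J x)) :
    expGrowthSup (laplaceIntegral μ φ Set.univ) ≤ ⨆ x, ((φ x : EReal) - J x) := by
  refine EReal.le_of_forall_lt_iff_le.1 fun c hc => ?_
  obtain ⟨s, hSs, hsc⟩ := EReal.exists_between_coe_real hc
  obtain ⟨M, hM⟩ := (eventually_lt_of_limsup_lt (htail.trans_lt hc)).exists
  calc _ ≤ ((s + (c - s) : ℝ) : EReal) ⊔ expGrowthSup (laplaceIntegral μ φ {x | M < φ x}) :=
        expGrowthSup_laplaceIntegral_univ_le μ φ hub hφ hSs.le (sub_pos.2 (mod_cast hsc)) M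
    _ ≤ c := sup_le (by simp) hM.le

end Laplace

theorem varadhan_upper_iff_tail_general
    {X : Type*} [TopologicalSpace X] [MeasurableSpace X]
    (μ : ℕ → Measure X)
    (J : X → ℝ≥0∞)
    (hub : ∀ F : Set X, IsClosed F →
      Filter.limsup (fun n : ℕ => ((n : ℝ)⁻¹ : EReal) * ENNReal.log (μ n F)) Filter.atTop
        ≤ -(⨅ x ∈ F, (J x : EReal)))
    (φ : X → ℝ) (hφ : UpperSemicontinuous φ) :
    (Filter.limsup (fun n : ℕ => ((n : ℝ)⁻¹ : EReal) *
        ENNReal.log (∫⁻ x, ENNReal.ofReal (Real.exp (n * φ x)) ∂ μ n)) Filter.atTop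
      ≤ ⨆ x, ((φ x : EReal) - (J x : EReal)))
    ↔ (Filter.limsup (fun M : ℝ =>
        Filter.limsup (fun n : ℕ => ((n : ℝ)⁻¹ : EReal) *
          ENNReal.log (∫⁻ x in {x | M < φ x}, ENNReal.ofReal (Real.exp (n * φ x)) ∂ μ n))
          Filter.atTop) Filter.atTop
      ≤ ⨆ x, ((φ x : EReal) - (J x : EReal))) := by
  simp only [limsup_inv_mul_log_eq_expGrowthSup] at hub ⊢
  rw [← laplaceIntegral_univ]
  refine ⟨fun h => ?_, expGrowthSup_laplaceIntegral_univ_le_of_tail μ φ hub hφ⟩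
  refine (limsup_le_iSup.trans (iSup_le fun M => ?_)).trans h
  exact expGrowthSup_monotone (laplaceIntegral_mono μ φ (Set.subset_univ _))

/-- Varadhan's upper bound without goodness of the rate function: for an upper
semicontinuous integrand `φ`, the upper bound holds iff the tail condition holds. -/
theorem varadhan_upper_iff_tail
    {X : Type*} [TopologicalSpace X] [MeasurableSpace X] [BorelSpace X]
    (μ : ℕ → Measure X) [∀ n, IsProbabilityMeasure (μ n)]
    (J : X → ℝ≥0∞) (hJ : LowerSemicontinuous J)
    (hub : ∀ F : Set X, IsClosed F →
      Filter.limsup (fun n : ℕ => ((n : ℝ)⁻¹ : EReal) * ENNReal.log (μ n F)) Filter.atTop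
        ≤ -(⨅ x ∈ F, (J x : EReal)))
    (hlb : ∀ G : Set X, IsOpen G →
      -(⨅ x ∈ G, (J x : EReal)) ≤
        Filter.liminf (fun n : ℕ => ((n : ℝ)⁻¹ : EReal) * ENNReal.log (μ n G)) Filter.atTop)
    (φ : X → ℝ) (hφ : UpperSemicontinuous φ) :
    (Filter.limsup (fun n : ℕ => ((n : ℝ)⁻¹ : EReal) *
        ENNReal.log (∫⁻ x, ENNReal.ofReal (Real.exp (n * φ x)) ∂ μ n)) Filter.atTop
      ≤ ⨆ x, ((φ x : EReal) - (J x : EReal)))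
    ↔ (Filter.limsup (fun M : ℝ =>
        Filter.limsup (fun n : ℕ => ((n : ℝ)⁻¹ : EReal) *
          ENNReal.log (∫⁻ x in {x | M < φ x}, ENNReal.ofReal (Real.exp (n * φ x)) ∂ μ n))
          Filter.atTop) Filter.atTop
      ≤ ⨆ x, ((φ x : EReal) - (J x : EReal))) :=
  varadhan_upper_iff_tail_general μ J hub φ hφ
end

section
/- Let X be a topological space and let (μ_n) be a sequence of Borel probability measures on X satisfying the large deviations principle with rate function J (lower semicontinuous, not assumed to have compact sublevel sets). Assume J is continuous. Let φ : X → [−∞,∞] be any Borel measurable function and write φ_M = φ ∧ M for M ∈ ℝ. Then limsup_{n→∞} (1/n) log ∫_X e^{n φ(x)} μ_n(dx) ≤ lim_{M→∞} sup_{x∈X} [φ_M(x) − J(x)] holds if and only if lim_{M→∞} limsup_{n→∞} (1/n) log ∫_X e^{n φ(x)} 1{φ(x) > M} μ_n(dx) ≤ lim_{M→∞} sup_{x∈X} [φ_M(x) − J(x)]. -/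
/-!
Splitting `∫ e^{nφ} dμₙ` over `{φ > M}` and its complement reduces the theorem to the Varadhan
upper bound for the function `φ ∧ M`, which is bounded above. For such a function `f` and any real
`b > sup (f - J)`, one has `f ≤ b + ψ` with `ψ = min J (M - b)⁺`, a continuous bounded function
dominated by `J`. Cutting the range of `ψ` into slabs of width `δ` and applying the LDP upper bound
to the closed superlevel sets `{ψ ≥ i δ}` shows that `∫ e^{nψ} dμₙ` grows at most like `e^{nδ}`.
Continuity of `J` is what makes these superlevel sets closed although `φ` is only measurable.
-/

open MeasureTheory Filter Topology ENNReal ExpGrowth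

def IsLDPUpperBound {X : Type*} [TopologicalSpace X] [MeasurableSpace X]
    (μ : ℕ → Measure X) (J : X → ℝ≥0∞) : Prop :=
  ∀ F : Set X, IsClosed F → expGrowthSup (fun n => μ n F) ≤ -⨅ x ∈ F, (J x : EReal)

lemma expGrowthSup_exp_mul_le (a : ℝ) (u : ℕ → ℝ≥0∞) :
    expGrowthSup (fun n => EReal.exp (a * n) * u n) ≤ a + expGrowthSup u := by
  have hexp := expGrowthSup_exp (a := (a : EReal))
  refine (expGrowthSup_mul_le (.inl ?_) (.inl ?_)).trans_eq ?_ <;> simp [hexp]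

section UpperBound

variable {X : Type*} [TopologicalSpace X] [MeasurableSpace X]
  {μ : ℕ → Measure X} {J : X → ℝ≥0∞}

lemma IsLDPUpperBound.expGrowthSup_superlevelSet_le (hub : IsLDPUpperBound μ J) {ψ : X → ℝ}
    (hψ : Continuous ψ) (hψJ : ∀ x, (ψ x : EReal) ≤ J x) (t : ℝ) :
    expGrowthSup (fun n => μ n {x | t ≤ ψ x}) ≤ -(t : EReal) := by
  refine (hub _ (isClosed_le continuous_const hψ)).trans (EReal.neg_le_neg_iff.2 ?_)
  exact le_iInf₂ fun x hx => (EReal.coe_le_coe_iff.2 hx).trans (hψJ x)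

lemma IsLDPUpperBound.expGrowthSup_lintegral_exp_le_zero [OpensMeasurableSpace X]
    (hub : IsLDPUpperBound μ J) {ψ : X → ℝ} (hψ : Continuous ψ) (hψ0 : 0 ≤ ψ) {c : ℝ}
    (hψc : ∀ x, ψ x ≤ c) (hψJ : ∀ x, (ψ x : EReal) ≤ J x) :
    expGrowthSup (fun n => ∫⁻ x, EReal.exp (n * ψ x) ∂μ n) ≤ 0 := by
  refine EReal.le_of_forall_lt_iff_le.1 fun δ hδ => ?_
  have hδ : 0 < δ := EReal.coe_pos.1 hδ
  set N := ⌊c / δ⌋₊ + 1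
  set F : ℕ → Set X := fun i => {x | i * δ ≤ ψ x}
  have hslab : ∀ x, ∃ i < N, i * δ ≤ ψ x ∧ ψ x ≤ (i + 1) * δ := by
    intro x
    refine ⟨⌊ψ x / δ⌋₊, Nat.lt_succ_of_le (Nat.floor_le_floor (by gcongr; exact hψc x)), ?_, ?_⟩
    · exact (le_div_iff₀ hδ).1 (Nat.floor_le (div_nonneg (hψ0 x) hδ.le))
    · exact ((div_le_iff₀ hδ).1 (Nat.lt_floor_add_one _).le)
  have hint : ∀ n : ℕ, ∫⁻ x, EReal.exp (n * ψ x) ∂μ n ≤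
      ∑ i ∈ Finset.range N, EReal.exp (((i + 1) * δ : ℝ) * n) * μ n (F i) := by
    intro n
    calc ∫⁻ x, EReal.exp (n * ψ x) ∂μ n
        ≤ ∫⁻ x, ∑ i ∈ Finset.range N, (F i).indicator
            (fun _ => EReal.exp (((i + 1) * δ : ℝ) * n)) x ∂μ n := by
          refine lintegral_mono fun x => ?_
          obtain ⟨i, hiN, hi, hi'⟩ := hslab x
          refine le_trans ?_ (Finset.single_le_sum (fun _ _ => zero_le)
            (Finset.mem_range.2 hiN))
          rw [Set.indicator_of_mem (show x ∈ F i from hi), EReal.exp_le_exp_iff,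
            mul_comm (n : EReal)]
          exact mul_le_mul_of_nonneg_right (EReal.coe_le_coe_iff.2 hi')
            (Nat.cast_nonneg' n)
      _ = _ := by
          rw [lintegral_finsetSum _ fun i _ => measurable_const.indicator
            (isClosed_le continuous_const hψ).measurableSet]
          simp only [F, lintegral_indicator_const (isClosed_le continuous_const hψ).measurableSet]
  have hslab_rate : ∀ i : ℕ,
      expGrowthSup (fun n => EReal.exp (((i + 1) * δ : ℝ) * n) * μ n (F i)) ≤ δ := by
    intro i
    calc _ ≤ (((i + 1) * δ : ℝ) : EReal) + expGrowthSup (fun n => μ n (F i)) :=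
          expGrowthSup_exp_mul_le _ _
      _ ≤ (((i + 1) * δ : ℝ) : EReal) + -((i * δ : ℝ) : EReal) := by
          gcongr; exact hub.expGrowthSup_superlevelSet_le hψ hψJ _
      _ = δ := by norm_cast; push_cast; ring
  calc expGrowthSup (fun n => ∫⁻ x, EReal.exp (n * ψ x) ∂μ n)
      ≤ expGrowthSup (∑ i ∈ Finset.range N,
          fun n => EReal.exp (((i + 1) * δ : ℝ) * n) * μ n (F i)) :=
        expGrowthSup_monotone fun n => by simpa only [Finset.sum_apply] using hint n
    _ ≤ δ := by
        rw [expGrowthSup_sum]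
        exact iSup₂_le fun i _ => hslab_rate i

lemma IsLDPUpperBound.expGrowthSup_lintegral_exp_le_iSup_sub [OpensMeasurableSpace X]
    (hub : IsLDPUpperBound μ J) (hJ : Continuous J) {f : X → EReal} {M : ℝ}
    (hfM : ∀ x, f x ≤ M) :
    expGrowthSup (fun n => ∫⁻ x, EReal.exp (n * f x) ∂μ n) ≤ ⨆ x, f x - J x := by
  refine EReal.le_of_forall_lt_iff_le.1 fun b hb => ?_
  set c := ENNReal.ofReal (M - b)
  set ψ : X → ℝ := fun x => truncateToReal c (J x)
  have hψ : ∀ x, (ψ x : EReal) = min (c : EReal) (J x) := fun x => by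
    rw [show ψ x = (min c (J x)).toReal from rfl,
      EReal.coe_ennreal_toReal (ne_top_of_le_ne_top ofReal_ne_top (min_le_left _ _))]
    exact EReal.coe_ennreal_strictMono.monotone.map_min
  have hfψ : ∀ x, f x ≤ b + ψ x := by
    intro x
    rw [hψ, ← min_add_add_left]
    refine le_min ((hfM x).trans ?_) ?_
    · rw [EReal.coe_ennreal_ofReal, ← EReal.coe_add, EReal.coe_le_coe_iff]
      linarith [le_max_left (M - b) 0]
    · rw [← EReal.sub_le_iff_le_add (.inl (EReal.coe_ennreal_ne_bot _))
        (.inr (EReal.coe_ne_bot _))]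
      exact (le_iSup (fun x => f x - J x) x).trans hb.le
  have hint : ∀ n : ℕ, ∫⁻ x, EReal.exp (n * f x) ∂μ n ≤
      EReal.exp (b * n) * ∫⁻ x, EReal.exp (n * ψ x) ∂μ n := by
    intro n
    rw [← lintegral_const_mul' _ _ (by
      rw [ne_eq, EReal.exp_eq_top_iff, ← EReal.coe_coe_eq_natCast, ← EReal.coe_mul]
      exact EReal.coe_ne_top _)]
    refine lintegral_mono fun x => ?_
    rw [← EReal.exp_add, EReal.exp_le_exp_iff]
    calc (n : EReal) * f x ≤ n * (b + ψ x) :=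
          mul_le_mul_of_nonneg_left (hfψ x) (Nat.cast_nonneg' n)
      _ = b * n + n * ψ x := by
        rw [← EReal.coe_coe_eq_natCast]; norm_cast; ring
  calc expGrowthSup (fun n => ∫⁻ x, EReal.exp (n * f x) ∂μ n)
      ≤ expGrowthSup (fun n => EReal.exp (b * n) * ∫⁻ x, EReal.exp (n * ψ x) ∂μ n) :=
        expGrowthSup_monotone hint
    _ ≤ b + 0 := by
        refine (expGrowthSup_exp_mul_le _ _).trans ?_
        gcongr
        refine hub.expGrowthSup_lintegral_exp_le_zero
          ((continuous_truncateToReal ofReal_ne_top).comp hJ) (fun x => truncateToReal_nonneg)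
          (fun x => truncateToReal_le ofReal_ne_top) fun x => ?_
        rw [hψ]
        exact min_le_right _ _
    _ = b := add_zero _

lemma IsLDPUpperBound.expGrowthSup_lintegral_exp_le_sup_tail [OpensMeasurableSpace X]
    (hub : IsLDPUpperBound μ J) (hJ : Continuous J) {φ : X → EReal} (hφ : Measurable φ)
    (M : ℝ) :
    expGrowthSup (fun n => ∫⁻ x, EReal.exp (n * φ x) ∂μ n) ≤
      (⨆ x, (φ x ⊓ M) - J x) ⊔
        expGrowthSup (fun n => ∫⁻ x in {x | (M : EReal) < φ x}, EReal.exp (n * φ x) ∂μ n) := by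
  set s := {x | (M : EReal) < φ x}
  have hs : MeasurableSet s := measurableSet_lt measurable_const hφ
  have hsplit : ∀ n : ℕ, ∫⁻ x, EReal.exp (n * φ x) ∂μ n ≤
      ∫⁻ x, EReal.exp (n * (φ x ⊓ M)) ∂μ n + ∫⁻ x in s, EReal.exp (n * φ x) ∂μ n := by
    intro n
    rw [← lintegral_add_compl _ hs, add_comm]
    gcongr ?_ + _
    calc ∫⁻ x in sᶜ, EReal.exp (n * φ x) ∂μ n
        = ∫⁻ x in sᶜ, EReal.exp (n * (φ x ⊓ M)) ∂μ n :=
          setLIntegral_congr_fun hs.compl fun x hx => by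
            rw [inf_eq_left.2 (not_lt.1 (Set.notMem_ofPred_iff.1 hx))]
      _ ≤ ∫⁻ x, EReal.exp (n * (φ x ⊓ M)) ∂μ n := setLIntegral_le_lintegral _ _
  calc expGrowthSup (fun n => ∫⁻ x, EReal.exp (n * φ x) ∂μ n)
      ≤ expGrowthSup ((fun n => ∫⁻ x, EReal.exp (n * (φ x ⊓ M)) ∂μ n) +
          fun n => ∫⁻ x in s, EReal.exp (n * φ x) ∂μ n) :=
        expGrowthSup_monotone hsplit
    _ = _ := expGrowthSup_add
    _ ≤ _ := sup_le_sup_right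
        (hub.expGrowthSup_lintegral_exp_le_iSup_sub hJ fun _ => inf_le_right) _

end UpperBound

theorem varadhan_upper_iff_tail_of_continuous_rate_general
    {X : Type*} [TopologicalSpace X] [MeasurableSpace X] [BorelSpace X]
    (μ : ℕ → Measure X)
    (J : X → ℝ≥0∞) (hJc : Continuous J)
    (hub : ∀ F : Set X, IsClosed F →
      Filter.limsup (fun n : ℕ => ((n : ℝ)⁻¹ : EReal) * ENNReal.log (μ n F)) Filter.atTop
        ≤ -(⨅ x ∈ F, (J x : EReal)))
    (φ : X → EReal) (hφ : Measurable φ) :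
    (Filter.limsup (fun n : ℕ => ((n : ℝ)⁻¹ : EReal) *
        ENNReal.log (∫⁻ x, EReal.exp ((n : EReal) * φ x) ∂ μ n)) Filter.atTop
      ≤ Filter.limsup (fun M : ℝ => ⨆ x, (φ x ⊓ (M : EReal)) - (J x : EReal)) Filter.atTop)
    ↔ (Filter.limsup (fun M : ℝ =>
        Filter.limsup (fun n : ℕ => ((n : ℝ)⁻¹ : EReal) *
          ENNReal.log (∫⁻ x in {x | (M : EReal) < φ x}, EReal.exp ((n : EReal) * φ x) ∂ μ n))
          Filter.atTop) Filter.atTop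
      ≤ Filter.limsup (fun M : ℝ => ⨆ x, (φ x ⊓ (M : EReal)) - (J x : EReal)) Filter.atTop) := by
  simp only [limsup_inv_mul_log_eq_expGrowthSup] at hub ⊢
  replace hub : IsLDPUpperBound μ J := hub
  set B := limsup (fun M : ℝ => ⨆ x, (φ x ⊓ (M : EReal)) - (J x : EReal)) atTop
  set T := fun M : ℝ =>
    expGrowthSup (fun n => ∫⁻ x in {x | (M : EReal) < φ x}, EReal.exp (n * φ x) ∂μ n)
  have hβB : ∀ M : ℝ, (⨆ x, (φ x ⊓ (M : EReal)) - (J x : EReal)) ≤ B := fun M =>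
    le_limsup_of_frequently_le' <| Eventually.frequently <|
      (eventually_ge_atTop M).mono fun _ hM => iSup_mono fun _ =>
        EReal.sub_le_sub (inf_le_inf_left _ (EReal.coe_le_coe_iff.2 hM)) le_rfl
  constructor
  · intro h
    refine limsup_le_of_le (by isBoundedDefault) (Eventually.of_forall fun M => ?_)
    exact (expGrowthSup_monotone fun n => setLIntegral_le_lintegral _ _).trans h
  · intro htail
    calc expGrowthSup (fun n => ∫⁻ x, EReal.exp (n * φ x) ∂μ n)
        ≤ limsup (fun M => B ⊔ T M) atTop :=
          le_limsup_of_frequently_le' <| Frequently.of_forall fun M =>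
            (hub.expGrowthSup_lintegral_exp_le_sup_tail hJc hφ M).trans
              (sup_le_sup_right (hβB M) _)
      _ = B ⊔ limsup T atTop := by rw [limsup_max, limsup_const]
      _ ≤ B := sup_le le_rfl htail

/-- Main lemma under condition 1 (continuous rate function): for a Borel measurable
extended-real integrand `φ`, the generalized Varadhan upper bound holds iff the tail
condition holds. -/
theorem varadhan_upper_iff_tail_of_continuous_rate
    {X : Type*} [TopologicalSpace X] [MeasurableSpace X] [BorelSpace X]
    (μ : ℕ → Measure X) [∀ n, IsProbabilityMeasure (μ n)]
    (J : X → ℝ≥0∞) (hJ : LowerSemicontinuous J) (hJc : Continuous J)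
    (hub : ∀ F : Set X, IsClosed F →
      Filter.limsup (fun n : ℕ => ((n : ℝ)⁻¹ : EReal) * ENNReal.log (μ n F)) Filter.atTop
        ≤ -(⨅ x ∈ F, (J x : EReal)))
    (hlb : ∀ G : Set X, IsOpen G →
      -(⨅ x ∈ G, (J x : EReal)) ≤
        Filter.liminf (fun n : ℕ => ((n : ℝ)⁻¹ : EReal) * ENNReal.log (μ n G)) Filter.atTop)
    (φ : X → EReal) (hφ : Measurable φ) :
    (Filter.limsup (fun n : ℕ => ((n : ℝ)⁻¹ : EReal) *
        ENNReal.log (∫⁻ x, EReal.exp ((n : EReal) * φ x) ∂ μ n)) Filter.atTop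
      ≤ Filter.limsup (fun M : ℝ => ⨆ x, (φ x ⊓ (M : EReal)) - (J x : EReal)) Filter.atTop)
    ↔ (Filter.limsup (fun M : ℝ =>
        Filter.limsup (fun n : ℕ => ((n : ℝ)⁻¹ : EReal) *
          ENNReal.log (∫⁻ x in {x | (M : EReal) < φ x}, EReal.exp ((n : EReal) * φ x) ∂ μ n))
          Filter.atTop) Filter.atTop
      ≤ Filter.limsup (fun M : ℝ => ⨆ x, (φ x ⊓ (M : EReal)) - (J x : EReal)) Filter.atTop) :=
  varadhan_upper_iff_tail_of_continuous_rate_general μ J hJc hub φ hφ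
end

section
/- Let X be a topological space and let (μ_n) be a sequence of Borel probability measures on X satisfying the large deviations principle with rate function J (lower semicontinuous, not assumed to have compact sublevel sets). Let φ : X → [−∞,∞] be a Borel measurable function, write φ_M = φ ∧ M for M ∈ ℝ, and assume that the superlevel set φ^{−1}([w,∞]) is closed for every w ∈ ℝ with w ≥ lim_{M→∞} sup_{x∈X} [φ_M(x) − J(x)]. Then limsup_{n→∞} (1/n) log ∫_X e^{n φ(x)} μ_n(dx) ≤ lim_{M→∞} sup_{x∈X} [φ_M(x) − J(x)] holds if and only if lim_{M→∞} limsup_{n→∞} (1/n) log ∫_X e^{n φ(x)} 1{φ(x) > M} μ_n(dx) ≤ lim_{M→∞} sup_{x∈X} [φ_M(x) − J(x)]. -/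
open MeasureTheory Filter Topology ENNReal ExpGrowth

lemma expGrowthSup_exp_nat_mul (a : EReal) :
    expGrowthSup (fun n : ℕ => EReal.exp ((n : EReal) * a)) = a := by
  simp_rw [mul_comm _ a]
  exact expGrowthSup_exp

lemma expGrowthSup_exp_nat_mul_mul_le (w : ℝ) (u : ℕ → ℝ≥0∞) :
    expGrowthSup (fun n : ℕ => EReal.exp ((n : EReal) * w) * u n) ≤ w + expGrowthSup u := by
  have h := expGrowthSup_exp_nat_mul (w : EReal)
  exact (expGrowthSup_mul_le (u := fun n : ℕ => EReal.exp ((n : EReal) * w)) (by simp [h])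
    (by simp [h])).trans_eq (by rw [h])

lemma exp_nat_mul_le (n : ℕ) {s t : EReal} (h : s ≤ t) :
    EReal.exp ((n : EReal) * s) ≤ EReal.exp ((n : EReal) * t) := by
  gcongr

lemma coe_add_neg_biInf_le {ι : Type*} {s : Set ι} {f : ι → EReal} {w c ε : ℝ}
    (h : ∀ i ∈ s, (w : EReal) - f i ≤ c) :
    ((w + ε : ℝ) : EReal) + -(⨅ i ∈ s, f i) ≤ ((c + ε : ℝ) : EReal) := by
  have hinf : ((w - c : ℝ) : EReal) ≤ ⨅ i ∈ s, f i := by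
    refine le_iInf₂ fun i hi => ?_
    rw [EReal.coe_sub, EReal.sub_le_iff_le_add (.inl (EReal.coe_ne_bot c))
      (.inl (EReal.coe_ne_top c)), add_comm, ← EReal.sub_le_iff_le_add
      (.inr (EReal.coe_ne_top c)) (.inr (EReal.coe_ne_bot c))]
    exact h i hi
  calc ((w + ε : ℝ) : EReal) + -(⨅ i ∈ s, f i)
      ≤ ((w + ε : ℝ) : EReal) + ((c - w : ℝ) : EReal) := by
        gcongr
        rw [EReal.neg_le, ← EReal.coe_neg, neg_sub]
        exact hinf
    _ = ((c + ε : ℝ) : EReal) := by rw [← EReal.coe_add]; ring_nf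

lemma exists_level_of_mem_Ioc {c ε M t : ℝ} (hε : 0 < ε) {K : ℕ} (hK : (M - c) / ε < K)
    (hct : c < t) (htM : t ≤ M) :
    ∃ i < K, c + i * ε ≤ t ∧ t ≤ c + i * ε + ε := by
  have hq : 0 ≤ (t - c) / ε := div_nonneg (by linarith) hε.le
  refine ⟨⌊(t - c) / ε⌋₊, ?_, ?_, ?_⟩
  · exact (Nat.floor_lt hq).2 (lt_of_le_of_lt (by gcongr) hK)
  · have := (le_div_iff₀ hε).1 (Nat.floor_le hq)
    linarith
  · have := (div_lt_iff₀ hε).1 (Nat.lt_floor_add_one ((t - c) / ε))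
    linarith

section

variable {X : Type*}

def superlevelSet (φ : X → EReal) (w : ℝ) : Set X := {x | (w : EReal) ≤ φ x}

lemma mem_superlevelSet {φ : X → EReal} {w : ℝ} {x : X} :
    x ∈ superlevelSet φ w ↔ (w : EReal) ≤ φ x :=
  Iff.rfl

lemma coe_sub_le_limsup_iSup_inf_sub (φ J : X → EReal) {w : ℝ} {x : X}
    (hx : (w : EReal) ≤ φ x) :
    (w : EReal) - J x ≤ limsup (fun M : ℝ => ⨆ y, φ y ⊓ (M : EReal) - J y) atTop := by
  have hmono : Monotone (fun M : ℝ => ⨆ y, φ y ⊓ (M : EReal) - J y) := fun a b hab =>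
    iSup_mono fun y => EReal.sub_le_sub (inf_le_inf_left _ (EReal.coe_le_coe_iff.2 hab)) le_rfl
  calc (w : EReal) - J x = φ x ⊓ (w : EReal) - J x := by rw [inf_eq_right.2 hx]
    _ ≤ ⨆ y, φ y ⊓ (w : EReal) - J y := le_iSup (fun y => φ y ⊓ (w : EReal) - J y) x
    _ ≤ _ := le_limsup_of_frequently_le
        ((eventually_ge_atTop w).mono fun M hM => hmono hM).frequently (by isBoundedDefault)

lemma exp_nat_mul_le_levels (φ : X → EReal) (n : ℕ) {c ε M : ℝ} (hε : 0 < ε) {K : ℕ}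
    (hK : (M - c) / ε < K) (x : X) :
    EReal.exp ((n : EReal) * φ x) ≤ EReal.exp ((n : EReal) * c)
      + ∑ i ∈ Finset.range K, (superlevelSet φ (c + i * ε)).indicator
          (fun _ => EReal.exp ((n : EReal) * ((c + i * ε + ε : ℝ) : EReal))) x
      + {y | (M : EReal) < φ y}.indicator (fun y => EReal.exp ((n : EReal) * φ y)) x := by
  by_cases hc : φ x ≤ c
  · exact (exp_nat_mul_le n hc).trans (le_self_add.trans le_self_add)
  by_cases hM : (M : EReal) < φ x
  · rw [Set.indicator_of_mem (show x ∈ {y | (M : EReal) < φ y} from hM)]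
    exact le_add_self
  rw [not_le] at hc
  rw [not_lt] at hM
  lift φ x to ℝ using ⟨ne_top_of_le_ne_top (EReal.coe_ne_top M) hM, ne_bot_of_gt hc⟩
    with t ht
  obtain ⟨i, hiK, hit, hti⟩ := exists_level_of_mem_Ioc hε hK (EReal.coe_lt_coe_iff.1 hc)
    (EReal.coe_le_coe_iff.1 hM)
  calc EReal.exp ((n : EReal) * t)
      ≤ EReal.exp ((n : EReal) * ((c + i * ε + ε : ℝ) : EReal)) :=
        exp_nat_mul_le n (EReal.coe_le_coe_iff.2 hti)
    _ = (superlevelSet φ (c + i * ε)).indicator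
          (fun _ => EReal.exp ((n : EReal) * ((c + i * ε + ε : ℝ) : EReal))) x := by
        rw [Set.indicator_of_mem (mem_superlevelSet.2 (ht ▸ EReal.coe_le_coe_iff.2 hit))]
    _ ≤ ∑ j ∈ Finset.range K, (superlevelSet φ (c + j * ε)).indicator
          (fun _ => EReal.exp ((n : EReal) * ((c + j * ε + ε : ℝ) : EReal))) x :=
        Finset.single_le_sum (f := fun j : ℕ => (superlevelSet φ (c + j * ε)).indicator
          (fun _ => EReal.exp ((n : EReal) * ((c + j * ε + ε : ℝ) : EReal))) x)
          (fun _ _ => zero_le) (Finset.mem_range.2 hiK)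
    _ ≤ _ := le_add_self.trans le_self_add

variable [MeasurableSpace X]

lemma lintegral_exp_nat_mul_le_levels (μ : Measure X) [IsProbabilityMeasure μ] (φ : X → EReal)
    (n : ℕ) {c ε M : ℝ} (hε : 0 < ε) {K : ℕ} (hK : (M - c) / ε < K)
    (hmeas : ∀ i : ℕ, MeasurableSet (superlevelSet φ (c + i * ε))) :
    ∫⁻ x, EReal.exp ((n : EReal) * φ x) ∂μ ≤ EReal.exp ((n : EReal) * c)
      + ∑ i ∈ Finset.range K, EReal.exp ((n : EReal) * ((c + i * ε + ε : ℝ) : EReal))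
          * μ (superlevelSet φ (c + i * ε))
      + ∫⁻ x in {x | (M : EReal) < φ x}, EReal.exp ((n : EReal) * φ x) ∂μ := by
  have hlevels : Measurable fun x => ∑ i ∈ Finset.range K,
      (superlevelSet φ (c + i * ε)).indicator
        (fun _ => EReal.exp ((n : EReal) * ((c + i * ε + ε : ℝ) : EReal))) x :=
    Finset.measurable_fun_sum _ fun i _ => measurable_const.indicator (hmeas i)
  have hbody : Measurable fun x => EReal.exp ((n : EReal) * c) + ∑ i ∈ Finset.range K,
      (superlevelSet φ (c + i * ε)).indicator
        (fun _ => EReal.exp ((n : EReal) * ((c + i * ε + ε : ℝ) : EReal))) x :=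
    measurable_const.add hlevels
  calc ∫⁻ x, EReal.exp ((n : EReal) * φ x) ∂μ
      ≤ ∫⁻ x, (EReal.exp ((n : EReal) * c)
          + ∑ i ∈ Finset.range K, (superlevelSet φ (c + i * ε)).indicator
              (fun _ => EReal.exp ((n : EReal) * ((c + i * ε + ε : ℝ) : EReal))) x
          + {y | (M : EReal) < φ y}.indicator (fun y => EReal.exp ((n : EReal) * φ y)) x) ∂μ :=
        lintegral_mono (exp_nat_mul_le_levels φ n hε hK)
    _ ≤ _ := by
        rw [lintegral_add_left hbody, lintegral_add_left measurable_const,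
          lintegral_const, measure_univ, mul_one, lintegral_finsetSum' _ fun i _ =>
            (measurable_const.indicator (hmeas i)).aemeasurable]
        simp_rw [lintegral_indicator_const (hmeas _)]
        exact add_le_add le_rfl (lintegral_indicator_le _ _)

lemma expGrowthSup_lintegral_exp_le_levels (μ : ℕ → Measure X)
    [∀ n, IsProbabilityMeasure (μ n)] (φ : X → EReal) {c ε M : ℝ} (hε : 0 < ε) {K : ℕ}
    (hK : (M - c) / ε < K)
    (hmeas : ∀ i : ℕ, MeasurableSet (superlevelSet φ (c + i * ε))) :
    expGrowthSup (fun n => ∫⁻ x, EReal.exp ((n : EReal) * φ x) ∂μ n) ≤ (c : EReal)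
      ⊔ (⨆ i ∈ Finset.range K, ((c + i * ε + ε : ℝ) : EReal)
          + expGrowthSup (fun n => μ n (superlevelSet φ (c + i * ε))))
      ⊔ expGrowthSup (fun n =>
          ∫⁻ x in {x | (M : EReal) < φ x}, EReal.exp ((n : EReal) * φ x) ∂μ n) := by
  calc _ ≤ expGrowthSup ((fun n : ℕ => EReal.exp ((n : EReal) * c))
        + ∑ i ∈ Finset.range K, (fun n : ℕ =>
            EReal.exp ((n : EReal) * ((c + i * ε + ε : ℝ) : EReal))
              * μ n (superlevelSet φ (c + i * ε)))
        + fun n => ∫⁻ x in {x | (M : EReal) < φ x}, EReal.exp ((n : EReal) * φ x) ∂μ n) :=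
        expGrowthSup_monotone fun n => by
          simpa only [Pi.add_apply, Finset.sum_apply] using
            lintegral_exp_nat_mul_le_levels (μ n) φ n hε hK hmeas
    _ ≤ _ := by
        rw [expGrowthSup_add, expGrowthSup_add, expGrowthSup_sum, expGrowthSup_exp_nat_mul]
        gcongr with i
        exact expGrowthSup_exp_nat_mul_mul_le _ _

end

theorem varadhan_upper_iff_tail_of_closed_superlevels_general
    {X : Type*} [TopologicalSpace X] [MeasurableSpace X] [BorelSpace X]
    (μ : ℕ → Measure X) [∀ n, IsProbabilityMeasure (μ n)]
    (J : X → ℝ≥0∞)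
    (hub : ∀ F : Set X, IsClosed F →
      Filter.limsup (fun n : ℕ => ((n : ℝ)⁻¹ : EReal) * ENNReal.log (μ n F)) Filter.atTop
        ≤ -(⨅ x ∈ F, (J x : EReal)))
    (φ : X → EReal)
    (hlevel : ∀ w : ℝ,
      Filter.limsup (fun M : ℝ => ⨆ x, (φ x ⊓ (M : EReal)) - (J x : EReal)) Filter.atTop
        ≤ (w : EReal) → IsClosed {x | (w : EReal) ≤ φ x}) :
    (Filter.limsup (fun n : ℕ => ((n : ℝ)⁻¹ : EReal) *
        ENNReal.log (∫⁻ x, EReal.exp ((n : EReal) * φ x) ∂ μ n)) Filter.atTop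
      ≤ Filter.limsup (fun M : ℝ => ⨆ x, (φ x ⊓ (M : EReal)) - (J x : EReal)) Filter.atTop)
    ↔ (Filter.limsup (fun M : ℝ =>
        Filter.limsup (fun n : ℕ => ((n : ℝ)⁻¹ : EReal) *
          ENNReal.log (∫⁻ x in {x | (M : EReal) < φ x}, EReal.exp ((n : EReal) * φ x) ∂ μ n))
          Filter.atTop) Filter.atTop
      ≤ Filter.limsup (fun M : ℝ => ⨆ x, (φ x ⊓ (M : EReal)) - (J x : EReal)) Filter.atTop) := by
  simp only [limsup_inv_mul_log_eq_expGrowthSup] at hub ⊢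
  constructor
  · refine fun h => limsup_le_of_le (by isBoundedDefault) (Eventually.of_forall fun M => ?_)
    exact (expGrowthSup_monotone fun n => setLIntegral_le_lintegral _ _).trans h
  intro htail
  refine EReal.le_of_forall_lt_iff_le.1 fun D hβD => ?_
  obtain ⟨c, hβc, hcD⟩ := EReal.lt_iff_exists_real_btwn.1 hβD
  obtain ⟨M, hM⟩ := (eventually_lt_of_limsup_lt (htail.trans_lt hβD)).exists
  have hε : 0 < D - c := sub_pos.2 (EReal.coe_lt_coe_iff.1 hcD)
  obtain ⟨K, hK⟩ := exists_nat_gt ((M - c) / (D - c))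
  have hclosed (i : ℕ) : IsClosed (superlevelSet φ (c + i * (D - c))) :=
    hlevel _ (hβc.le.trans (EReal.coe_le_coe_iff.2 (le_add_of_nonneg_right (by positivity))))
  refine (expGrowthSup_lintegral_exp_le_levels μ φ hε hK
    fun i => (hclosed i).measurableSet).trans <|
    sup_le (sup_le hcD.le (iSup₂_le fun i _ => ?_)) hM.le
  calc _ ≤ ((c + i * (D - c) + (D - c) : ℝ) : EReal)
        + -(⨅ x ∈ superlevelSet φ (c + i * (D - c)), (J x : EReal)) :=
        add_le_add le_rfl (hub _ (hclosed i))
    _ ≤ ((c + (D - c) : ℝ) : EReal) := coe_add_neg_biInf_le fun x hx =>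
        (coe_sub_le_limsup_iSup_inf_sub φ (fun y => (J y : EReal)) hx).trans hβc.le
    _ = D := by ring_nf

/-- Main lemma under condition 2 (closed superlevel sets above the limiting value): for a
Borel measurable extended-real integrand `φ`, the generalized Varadhan upper bound holds
iff the tail condition holds. -/
theorem varadhan_upper_iff_tail_of_closed_superlevels
    {X : Type*} [TopologicalSpace X] [MeasurableSpace X] [BorelSpace X]
    (μ : ℕ → Measure X) [∀ n, IsProbabilityMeasure (μ n)]
    (J : X → ℝ≥0∞) (hJ : LowerSemicontinuous J)
    (hub : ∀ F : Set X, IsClosed F →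
      Filter.limsup (fun n : ℕ => ((n : ℝ)⁻¹ : EReal) * ENNReal.log (μ n F)) Filter.atTop
        ≤ -(⨅ x ∈ F, (J x : EReal)))
    (hlb : ∀ G : Set X, IsOpen G →
      -(⨅ x ∈ G, (J x : EReal)) ≤
        Filter.liminf (fun n : ℕ => ((n : ℝ)⁻¹ : EReal) * ENNReal.log (μ n G)) Filter.atTop)
    (φ : X → EReal) (hφ : Measurable φ)
    (hlevel : ∀ w : ℝ,
      Filter.limsup (fun M : ℝ => ⨆ x, (φ x ⊓ (M : EReal)) - (J x : EReal)) Filter.atTop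
        ≤ (w : EReal) → IsClosed {x | (w : EReal) ≤ φ x}) :
    (Filter.limsup (fun n : ℕ => ((n : ℝ)⁻¹ : EReal) *
        ENNReal.log (∫⁻ x, EReal.exp ((n : EReal) * φ x) ∂ μ n)) Filter.atTop
      ≤ Filter.limsup (fun M : ℝ => ⨆ x, (φ x ⊓ (M : EReal)) - (J x : EReal)) Filter.atTop)
    ↔ (Filter.limsup (fun M : ℝ =>
        Filter.limsup (fun n : ℕ => ((n : ℝ)⁻¹ : EReal) *
          ENNReal.log (∫⁻ x in {x | (M : EReal) < φ x}, EReal.exp ((n : EReal) * φ x) ∂ μ n))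
          Filter.atTop) Filter.atTop
      ≤ Filter.limsup (fun M : ℝ => ⨆ x, (φ x ⊓ (M : EReal)) - (J x : EReal)) Filter.atTop) :=
  varadhan_upper_iff_tail_of_closed_superlevels_general μ J hub φ hlevel
end

section
/- Let X be a topological space and let (μ_n) be a sequence of Borel probability measures on X satisfying the large deviations principle with rate function J (lower semicontinuous, not assumed to have compact sublevel sets). Assume J is continuous. Let φ : X → [−∞,∞] be Borel measurable and write φ_M = φ ∧ M for M ∈ ℝ. Then for every b ∈ ℝ, limsup_{n→∞} (1/n) log ∫_X e^{n φ_b(x)} μ_n(dx) ≤ lim_{M→∞} sup_{x∈X} [φ_M(x) − J(x)]. -/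
/-!
Fix reals `c > sup (φ ∧ b - J)` and `δ > 0`. As `J` is continuous, the bands
`{kδ ≤ J ≤ (k+1)δ}` for `k < K` and `{J ≥ Kδ}` are closed, so the LDP upper bound applies to
each: the band of index `k` has mass at most `exp (-n (kδ - o(1)))`, while on it the integrand
is at most `exp (n (c + (k+1)δ))`, from `φ ∧ b ≤ c + J`, or from `φ ∧ b ≤ b` on the last band
once `Kδ ≥ b - c`. A finite sum of terms of exponential rate at most `c + δ` has rate at most
`c + δ`; letting `c` and `δ` decrease gives the bound `sup (φ ∧ b - J)`, which is at most
`lim_M sup (φ ∧ M - J)`.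
-/

open MeasureTheory Filter ENNReal

noncomputable def expRate (u : ℕ → ℝ≥0∞) : EReal :=
  limsup (fun n : ℕ => ((n : ℝ)⁻¹ : EReal) * ENNReal.log (u n)) atTop

section ExpRate

variable {u v : ℕ → ℝ≥0∞}

lemma inv_natCast_nonneg_ereal (n : ℕ) : (0 : EReal) ≤ ((n : ℝ)⁻¹ : EReal) :=
  EReal.inv_nonneg_of_nonneg (EReal.coe_nonneg.2 n.cast_nonneg)

lemma expRate_mono (h : u ≤ v) : expRate u ≤ expRate v :=
  limsup_le_limsup (.of_forall fun n =>
    mul_le_mul_of_nonneg_left (ENNReal.log_monotone (h n)) (inv_natCast_nonneg_ereal n))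

lemma expRate_zero : expRate 0 = ⊥ := by
  refine limsup_congr ((eventually_ge_atTop 1).mono fun n hn => ?_) |>.trans (limsup_const _)
  rw [Pi.zero_apply, ENNReal.log_zero, ← EReal.coe_inv,
    EReal.mul_bot_of_pos (EReal.coe_pos.2 (by positivity))]

lemma expRate_mul_le (h₁ : expRate u ≠ ⊥ ∨ expRate v ≠ ⊤)
    (h₂ : expRate u ≠ ⊤ ∨ expRate v ≠ ⊥) : expRate (u * v) ≤ expRate u + expRate v := by
  refine le_of_eq_of_le (limsup_congr (.of_forall fun n => ?_)) (EReal.limsup_add_le h₁ h₂)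
  rw [Pi.mul_apply, ENNReal.log_mul_add, EReal.left_distrib_of_nonneg_of_ne_top
    (inv_natCast_nonneg_ereal n) (EReal.inv_lt_top _).ne]
  rfl

lemma expRate_exp_mul (a : ℝ) : expRate (fun n => EReal.exp (n * a)) = a := by
  refine limsup_congr ((eventually_ge_atTop 1).mono fun n hn => ?_) |>.trans (limsup_const _)
  have hn : (n : ℝ) ≠ 0 := by positivity
  rw [EReal.log_exp, ← EReal.coe_coe_eq_natCast, ← EReal.coe_inv, ← EReal.coe_mul,
    ← EReal.coe_mul, inv_mul_cancel_left₀ hn]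

lemma expRate_const {C : ℝ≥0∞} (hC₀ : C ≠ 0) (hC : C ≠ ⊤) : expRate (fun _ => C) = 0 := by
  refine Tendsto.limsup_eq ?_
  simp only [ENNReal.log_pos_real hC₀ hC, ← EReal.coe_inv, ← EReal.coe_mul]
  simpa using EReal.tendsto_coe.2 (tendsto_inv_atTop_nhds_zero_nat.mul_const C.toReal.log)

lemma expRate_max : expRate (u ⊔ v) = expRate u ⊔ expRate v := by
  have h (n : ℕ) : Monotone (((n : ℝ)⁻¹ : EReal) * ·) := fun _ _ h =>
    mul_le_mul_of_nonneg_left h (inv_natCast_nonneg_ereal n)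
  simp only [expRate, Pi.sup_apply, ENNReal.log_monotone.map_max, (h _).map_max]
  exact limsup_max

lemma expRate_add_le : expRate (u + v) ≤ expRate u ⊔ expRate v := by
  have h2 : expRate (fun _ => 2) = 0 := expRate_const two_ne_zero ofNat_ne_top
  calc expRate (u + v) ≤ expRate ((fun _ => 2) * (u ⊔ v)) :=
        expRate_mono fun n => by simpa [two_mul] using add_le_add le_sup_left le_sup_right
    _ ≤ expRate (fun _ => 2) + expRate (u ⊔ v) := expRate_mul_le (by simp [h2]) (by simp [h2])
    _ = expRate u ⊔ expRate v := by rw [h2, zero_add, expRate_max]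

lemma expRate_finsetSum_le {ι : Type*} (s : Finset ι) (u : ι → ℕ → ℝ≥0∞) {r : EReal}
    (h : ∀ i ∈ s, expRate (u i) ≤ r) : expRate (∑ i ∈ s, u i) ≤ r := by
  classical
  induction s using Finset.induction_on with
  | empty => simp [expRate_zero]
  | insert i s hi ih =>
    rw [Finset.sum_insert hi]
    simp only [Finset.forall_mem_insert] at h
    exact expRate_add_le.trans (sup_le h.1 (ih h.2))

end ExpRate

lemma lintegral_le_sum_mul_measure_of_cover {X ι : Type*} [MeasurableSpace X] {ν : Measure X}
    (s : Finset ι) {F : ι → Set X} (hF : ∀ i ∈ s, MeasurableSet (F i))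
    (hcover : ∀ x, ∃ i ∈ s, x ∈ F i) {g : X → ℝ≥0∞} {C : ι → ℝ≥0∞}
    (hg : ∀ i ∈ s, ∀ x ∈ F i, g x ≤ C i) :
    ∫⁻ x, g x ∂ν ≤ ∑ i ∈ s, C i * ν (F i) := by
  calc ∫⁻ x, g x ∂ν ≤ ∫⁻ x, ∑ i ∈ s, (F i).indicator (fun _ => C i) x ∂ν := by
        refine lintegral_mono fun x => ?_
        obtain ⟨i, hi, hx⟩ := hcover x
        calc g x ≤ (F i).indicator (fun _ => C i) x := by
              rw [Set.indicator_of_mem hx]; exact hg i hi x hx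
          _ ≤ _ := Finset.single_le_sum (f := fun i => (F i).indicator (fun _ => C i) x)
              (fun _ _ => zero_le) hi
    _ = ∑ i ∈ s, C i * ν (F i) := by
        rw [lintegral_finsetSum s fun i hi => measurable_const.indicator (hF i hi)]
        exact Finset.sum_congr rfl fun i hi => lintegral_indicator_const (hF i hi) _

lemma expRate_exp_mul_measure_le {X : Type*} [MeasurableSpace X] {μ : ℕ → Measure X}
    {J : X → ℝ≥0∞} {F : Set X}
    (hF : expRate (fun n => μ n F) ≤ -(⨅ x ∈ F, (J x : EReal))) (a : ℝ) {l : ℝ}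
    (hl : ∀ x ∈ F, (l : EReal) ≤ J x) :
    expRate (fun n => EReal.exp (n * a) * μ n F) ≤ (a - l : ℝ) := by
  have ha := expRate_exp_mul a
  calc expRate (fun n => EReal.exp (n * a) * μ n F)
      ≤ expRate (fun n => EReal.exp (n * a)) + expRate (fun n => μ n F) :=
        expRate_mul_le (by simp [ha]) (by simp [ha])
    _ ≤ a + -(l : EReal) := by
        rw [ha]
        exact add_le_add_right (hF.trans (EReal.neg_le_neg_iff.2 (le_iInf₂ hl))) _
    _ = (a - l : ℝ) := rfl

section TruncatedBand

variable {X : Type*} (J : X → ℝ≥0∞) (δ : ℝ) (K : ℕ)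

-- For `k = K` the upper constraint is void: the last band `{J ≥ Kδ}` is unbounded.
def truncatedBand (k : ℕ) : Set X :=
  {x | ((k * δ : ℝ) : EReal) ≤ J x ∧ (k < K → (J x : EReal) ≤ ((k + 1) * δ : ℝ))}

variable {J δ}

lemma isClosed_truncatedBand [TopologicalSpace X] (hJ : Continuous J) (k : ℕ) :
    IsClosed (truncatedBand J δ K k) := by
  have hJ' : Continuous fun x => (J x : EReal) := continuous_coe_ennreal_ereal.comp hJ
  refine (isClosed_le continuous_const hJ').inter ?_
  by_cases hk : k < K
  · simp only [hk, true_imp_iff]; exact isClosed_le hJ' continuous_const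
  · simp only [hk, false_imp_iff]; exact isClosed_univ

lemma exists_mem_truncatedBand (hδ : 0 < δ) (x : X) :
    ∃ k ∈ Finset.range (K + 1), x ∈ truncatedBand J δ K k := by
  by_cases hK : ((K * δ : ℝ) : EReal) ≤ J x
  · exact ⟨K, Finset.self_mem_range_succ K, hK, fun h => absurd h (lt_irrefl K)⟩
  have ht : J x ≠ ⊤ := by intro h; simp [h] at hK
  simp only [truncatedBand, Set.mem_ofPred_eq, ← EReal.coe_ennreal_toReal ht,
    EReal.coe_le_coe_iff] at hK ⊢
  set t := (J x).toReal
  have hlow : (⌊t / δ⌋₊ : ℝ) * δ ≤ t :=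
    (le_div_iff₀ hδ).1 (Nat.floor_le (div_nonneg ENNReal.toReal_nonneg hδ.le))
  have hup : t < (⌊t / δ⌋₊ + 1) * δ := (div_lt_iff₀ hδ).1 (Nat.lt_floor_add_one _)
  refine ⟨⌊t / δ⌋₊, Finset.mem_range_succ_iff.2 ?_, hlow, fun _ => hup.le⟩
  exact_mod_cast (lt_of_mul_lt_mul_right (hlow.trans_lt (not_le.1 hK)) hδ.le).le

end TruncatedBand

lemma expRate_lintegral_exp_le_iSup_sub_of_continuous {X : Type*} [TopologicalSpace X]
    [MeasurableSpace X] [OpensMeasurableSpace X] {μ : ℕ → Measure X} {J : X → ℝ≥0∞}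
    (hJ : Continuous J)
    (hub : ∀ F : Set X, IsClosed F → expRate (fun n => μ n F) ≤ -(⨅ x ∈ F, (J x : EReal)))
    {f : X → EReal} {b : ℝ} (hfb : ∀ x, f x ≤ b) :
    expRate (fun n => ∫⁻ x, EReal.exp (n * f x) ∂μ n) ≤ ⨆ x, f x - J x := by
  refine EReal.le_of_forall_lt_iff_le.1 fun z hz => ?_
  obtain ⟨c, hc, hcz⟩ := EReal.exists_between_coe_real hz
  have hfc (x : X) : f x ≤ c + J x := by
    by_cases hJx : (J x : EReal) = ⊤
    · simp [hJx]
    exact ((EReal.sub_lt_iff (.inl (EReal.coe_ennreal_ne_bot _)) (.inl hJx)).1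
      ((le_iSup (fun x => f x - J x) x).trans_lt hc)).le
  set δ := z - c
  have hδ : 0 < δ := sub_pos.2 (EReal.coe_lt_coe_iff.1 hcz)
  obtain ⟨K, hK⟩ := exists_nat_ge ((b - c) / δ)
  have hfF : ∀ k ∈ Finset.range (K + 1), ∀ x ∈ truncatedBand J δ K k,
      f x ≤ (c + (k + 1) * δ : ℝ) := by
    intro k hk x hx
    by_cases hkK : k < K
    · exact (hfc x).trans (add_le_add_right (hx.2 hkK) _)
    · obtain rfl : k = K := by simp at hk; omega
      refine (hfb x).trans (EReal.coe_le_coe_iff.2 ?_)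
      linarith [(div_le_iff₀ hδ).1 hK]
  calc expRate (fun n => ∫⁻ x, EReal.exp (n * f x) ∂μ n)
      ≤ expRate (∑ k ∈ Finset.range (K + 1),
          fun n => EReal.exp (n * (c + (k + 1) * δ : ℝ)) * μ n (truncatedBand J δ K k)) := by
        refine expRate_mono fun n => ?_
        rw [Finset.sum_apply]
        exact lintegral_le_sum_mul_measure_of_cover _
          (fun k _ => (isClosed_truncatedBand K hJ k).measurableSet)
          (exists_mem_truncatedBand K hδ) fun k hk x hx =>
            EReal.exp_monotone (mul_le_mul_of_nonneg_left (hfF k hk x hx) (by positivity))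
    _ ≤ z := by
        refine expRate_finsetSum_le _ _ fun k _ =>
          (expRate_exp_mul_measure_le (hub _ (isClosed_truncatedBand K hJ k)) _
            fun x hx => hx.1).trans_eq ?_
        congr 1
        ring

theorem varadhan_truncated_upper_of_continuous_rate_general
    {X : Type*} [TopologicalSpace X] [MeasurableSpace X] [BorelSpace X]
    (μ : ℕ → Measure X)
    (J : X → ℝ≥0∞) (hJc : Continuous J)
    (hub : ∀ F : Set X, IsClosed F →
      Filter.limsup (fun n : ℕ => ((n : ℝ)⁻¹ : EReal) * ENNReal.log (μ n F)) Filter.atTop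
        ≤ -(⨅ x ∈ F, (J x : EReal)))
    (φ : X → EReal) (b : ℝ) :
    Filter.limsup (fun n : ℕ => ((n : ℝ)⁻¹ : EReal) *
        ENNReal.log (∫⁻ x, EReal.exp ((n : EReal) * (φ x ⊓ (b : EReal))) ∂ μ n)) Filter.atTop
      ≤ Filter.limsup (fun M : ℝ => ⨆ x, (φ x ⊓ (M : EReal)) - (J x : EReal)) Filter.atTop := by
  have hmono : Monotone fun M : ℝ => ⨆ x, (φ x ⊓ (M : EReal)) - (J x : EReal) := fun M M' h =>
    iSup_mono fun x => EReal.sub_le_sub (inf_le_inf_left _ (EReal.coe_le_coe_iff.2 h)) le_rfl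
  calc _ ≤ ⨆ x, (φ x ⊓ (b : EReal)) - (J x : EReal) :=
        expRate_lintegral_exp_le_iSup_sub_of_continuous hJc hub fun _ => inf_le_right
    _ ≤ _ :=
        le_limsup_of_frequently_le ((eventually_ge_atTop b).mono fun _ => (hmono ·)).frequently

/-- Key step of the main lemma under condition 1 (continuous rate function): for every
real truncation level `b`, the upper bound holds for the truncated integrand `φ ∧ b`. -/
theorem varadhan_truncated_upper_of_continuous_rate
    {X : Type*} [TopologicalSpace X] [MeasurableSpace X] [BorelSpace X]
    (μ : ℕ → Measure X) [∀ n, IsProbabilityMeasure (μ n)]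
    (J : X → ℝ≥0∞) (hJ : LowerSemicontinuous J) (hJc : Continuous J)
    (hub : ∀ F : Set X, IsClosed F →
      Filter.limsup (fun n : ℕ => ((n : ℝ)⁻¹ : EReal) * ENNReal.log (μ n F)) Filter.atTop
        ≤ -(⨅ x ∈ F, (J x : EReal)))
    (hlb : ∀ G : Set X, IsOpen G →
      -(⨅ x ∈ G, (J x : EReal)) ≤
        Filter.liminf (fun n : ℕ => ((n : ℝ)⁻¹ : EReal) * ENNReal.log (μ n G)) Filter.atTop)
    (φ : X → EReal) (hφ : Measurable φ) (b : ℝ) :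
    Filter.limsup (fun n : ℕ => ((n : ℝ)⁻¹ : EReal) *
        ENNReal.log (∫⁻ x, EReal.exp ((n : EReal) * (φ x ⊓ (b : EReal))) ∂ μ n)) Filter.atTop
      ≤ Filter.limsup (fun M : ℝ => ⨆ x, (φ x ⊓ (M : EReal)) - (J x : EReal)) Filter.atTop :=
  varadhan_truncated_upper_of_continuous_rate_general μ J hJc hub φ b
end
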